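/- The logic PF is sound and complete with respect to the class of all finite nice PF-frames: for any formula A of the bimodal language L_pf, A is a theorem of PF if and only if A is valid on all finite nice PF-frames. -/
import Mathlib


namespace PFPaper

/-- Formulas of the bimodal language `L_pf`, with propositional variables indexed by `ℕ`,
connectives `¬, ∧, ∨, →` and two modal operators `□p` (`boxp`) and `□f` (`boxf`). -/
inductive Formula : Type
  | var : ℕ → Formula
  | neg : Formula → Formula
  | and : Formula → Formula → Formula
  | or : Formula → Formula → Formula
  | imp : Formula → Formula → Formula
  | boxp : Formula → Formula
  | boxf : Formula → Formula
  deriving DecidableEq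

/-- `◇p A := ¬□p¬A`. -/
def diap (A : Formula) : Formula := .neg (.boxp (.neg A))

/-- `◇f A := ¬□f¬A`. -/
def diaf (A : Formula) : Formula := .neg (.boxf (.neg A))

/-- `A ↔ B` as an abbreviation: `(A → B) ∧ (B → A)`. -/
def iffF (A B : Formula) : Formula := .and (.imp A B) (.imp B A)

/-- `A` is a propositional tautology of `L_pf`: every Boolean assignment that treats
variables and boxed formulas as atoms and respects the connectives makes `A` true. -/
def Taut (A : Formula) : Prop :=
  ∀ f : Formula → Bool,
    (∀ B, f (.neg B) = !(f B)) →
    (∀ B C, f (.and B C) = (f B && f C)) →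
    (∀ B C, f (.or B C) = (f B || f C)) →
    (∀ B C, f (.imp B C) = (!(f B) || f C)) →
    f A = true

/-- The bimodal logic `PF`. -/
inductive PF : Formula → Prop
  | taut {A} : Taut A → PF A
  | kp (A B) : PF (.imp (.boxp (.imp A B)) (.imp (.boxp A) (.boxp B)))
  | lob (A) : PF (.imp (.boxp (.imp (.boxp A) A)) (.boxp A))
  | kf (A B) : PF (.imp (.boxf (.imp A B)) (.imp (.boxf A) (.boxf B)))
  | tf (A) : PF (.imp (.boxf A) A)
  | fourf (A) : PF (.imp (.boxf A) (.boxf (.boxf A)))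
  | dot2f (A) : PF (.imp (diaf (.boxf A)) (.boxf (diaf A)))
  | pf1 (A) : PF (.imp (.boxp A) (.boxf (.boxp A)))
  | pf2 (A) : PF (.imp (diap A) (.boxf (diap A)))
  | pf3 (A) : PF (.imp (.boxp A) (.boxp (.boxf A)))
  | mp {A B} : PF (.imp A B) → PF A → PF B
  | necp {A} : PF A → PF (.boxp A)
  | necf {A} : PF A → PF (.boxf A)

/-- The logic `PF^ω`: axioms are all theorems of `PF` together with all formulas
`□p A → □f A`; the sole rule is modus ponens. -/
inductive PFomega : Formula → Prop
  | ofPF {A} : PF A → PFomega A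
  | reflAx (A) : PFomega (.imp (.boxp A) (.boxf A))
  | mp {A B} : PFomega (.imp A B) → PFomega A → PFomega B

section Semantics

variable {W : Type}

/-- Kripke satisfaction on a frame `(W, R, S)` (`R` = `⊏` interprets `□p`,
`S` = `≼` interprets `□f`) with valuation `V`. -/
def Sat (R S : W → W → Prop) (V : W → ℕ → Prop) : W → Formula → Prop
  | w, .var n => V w n
  | w, .neg A => ¬ Sat R S V w A
  | w, .and A B => Sat R S V w A ∧ Sat R S V w B
  | w, .or A B => Sat R S V w A ∨ Sat R S V w B
  | w, .imp A B => Sat R S V w A → Sat R S V w B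
  | w, .boxp A => ∀ v, R w v → Sat R S V v A
  | w, .boxf A => ∀ v, S w v → Sat R S V v A

/-- `A` is valid on the frame `(W, R, S)`. -/
def ValidOn (R S : W → W → Prop) (A : Formula) : Prop :=
  ∀ (V : W → ℕ → Prop) (w : W), Sat R S V w A

/-- `(W, R, S)` is a `PF`-frame: all theorems of `PF` are valid on it. -/
def IsPFFrame (R S : W → W → Prop) : Prop :=
  ∀ A : Formula, PF A → ValidOn R S A

/-- The symmetric closure `∼` of `≼`. -/
def SymCl (S : W → W → Prop) (x y : W) : Prop := S x y ∨ S y x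

/-- `∼⁺`: the transitive closure of the symmetric closure of `≼`. -/
def EqCl (S : W → W → Prop) : W → W → Prop := Relation.TransGen (SymCl S)

/-- The cluster of `x`: its `∼⁺`-equivalence class. -/
def cluster (S : W → W → Prop) (x : W) : Set W := {y | EqCl S x y}

/-- A frame is nice iff `x ⊏ z` and `y ≼ z` imply `x ⊏ y`. -/
def Nice (R S : W → W → Prop) : Prop := ∀ x y z : W, R x z → S y z → R x y

/-- A nice `PF`-frame is rooted iff there is a `⊏`-root cluster and every cluster
has a `≼`-root element. -/
def Rooted (R S : W → W → Prop) : Prop :=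
  (∃ r : W, ∀ x : W, cluster S r = cluster S x ∨ R r x) ∧
  (∀ x : W, ∃ y ∈ cluster S x, ∀ z ∈ cluster S x, S y z)

/-- The cluster of `x`, preordered by `≼`, is a pre-Boolean algebra: its quotient by
`x ≈ y ↔ (x ≼ y ∧ y ≼ x)` forms a Boolean algebra, i.e. there is a Boolean algebra `B`
and a surjection `f` from the cluster onto `B` with `a ≼ b ↔ f a ≤ f b`. -/
def ClusterPBA (S : W → W → Prop) (x : W) : Prop :=
  ∃ (B : Type) (inst : BooleanAlgebra B) (f : cluster S x → B),
    Function.Surjective f ∧ ∀ a b : cluster S x, S a.1 b.1 ↔ inst.le (f a) (f b)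

end Semantics

/-- The list of subformulas of a formula. -/
def subf : Formula → List Formula
  | .var n => [.var n]
  | .neg A => .neg A :: subf A
  | .and A B => .and A B :: (subf A ++ subf B)
  | .or A B => .or A B :: (subf A ++ subf B)
  | .imp A B => .imp A B :: (subf A ++ subf B)
  | .boxp A => .boxp A :: subf A
  | .boxf A => .boxf A :: subf A

/-- `Φ(A) = { □p B → □f B : □p B ∈ Sub(A) }`. -/
def Phi (A : Formula) : List Formula :=
  (subf A).filterMap fun B =>
    match B with
    | .boxp C => some (.imp (.boxp C) (.boxf C))
    | _ => none

/-- Conjunction of a finite list of formulas (a fixed tautology if the list is empty). -/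
def conjList : List Formula → Formula
  | [] => .imp (.var 0) (.var 0)
  | [B] => B
  | B :: C :: t => .and B (conjList (C :: t))

/-- An injective, effective coding of formulas by natural numbers. -/
def encodeF : Formula → ℕ
  | .var n => Nat.pair 0 n
  | .neg A => Nat.pair 1 (encodeF A)
  | .and A B => Nat.pair 2 (Nat.pair (encodeF A) (encodeF B))
  | .or A B => Nat.pair 3 (Nat.pair (encodeF A) (encodeF B))
  | .imp A B => Nat.pair 4 (Nat.pair (encodeF A) (encodeF B))
  | .boxp A => Nat.pair 5 (encodeF A)
  | .boxf A => Nat.pair 6 (encodeF A)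

/-- Formulas of the unimodal language `L_p` (only `□p`, written `box`). -/
inductive LpForm : Type
  | var : ℕ → LpForm
  | neg : LpForm → LpForm
  | and : LpForm → LpForm → LpForm
  | or : LpForm → LpForm → LpForm
  | imp : LpForm → LpForm → LpForm
  | box : LpForm → LpForm
  deriving DecidableEq

/-- Propositional tautologies of `L_p`. -/
def TautLp (A : LpForm) : Prop :=
  ∀ f : LpForm → Bool,
    (∀ B, f (.neg B) = !(f B)) →
    (∀ B C, f (.and B C) = (f B && f C)) →
    (∀ B C, f (.or B C) = (f B || f C)) →
    (∀ B C, f (.imp B C) = (!(f B) || f C)) →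
    f A = true

/-- The provability logic `GL` in the language `L_p`. -/
inductive GLLogic : LpForm → Prop
  | taut {A} : TautLp A → GLLogic A
  | k (A B) : GLLogic (.imp (.box (.imp A B)) (.imp (.box A) (.box B)))
  | lob (A) : GLLogic (.imp (.box (.imp (.box A) A)) (.box A))
  | mp {A B} : GLLogic (.imp A B) → GLLogic A → GLLogic B
  | nec {A} : GLLogic A → GLLogic (.box A)

/-- Solovay's logic `S`: axioms are all theorems of `GL` and all `□p A → A`;
the sole rule is modus ponens. -/
inductive SLogic : LpForm → Prop
  | ofGL {A} : GLLogic A → SLogic A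
  | reflAx (A) : SLogic (.imp (.box A) A)
  | mp {A B} : SLogic (.imp A B) → SLogic A → SLogic B

/-- Embedding of `L_p` into `L_pf` (`box ↦ □p`). -/
def LpForm.toFormula : LpForm → Formula
  | .var n => .var n
  | .neg A => .neg A.toFormula
  | .and A B => .and A.toFormula B.toFormula
  | .or A B => .or A.toFormula B.toFormula
  | .imp A B => .imp A.toFormula B.toFormula
  | .box A => .boxp A.toFormula

/-- The fusion `GL⊗Triv` in the language `L_pf`: the `GL`-axioms for `□p`,
the axiom `A ↔ □f A`, with modus ponens and necessitation for `□p`. -/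
inductive GLTriv : Formula → Prop
  | taut {A} : Taut A → GLTriv A
  | kp (A B) : GLTriv (.imp (.boxp (.imp A B)) (.imp (.boxp A) (.boxp B)))
  | lob (A) : GLTriv (.imp (.boxp (.imp (.boxp A) A)) (.boxp A))
  | triv (A) : GLTriv (iffF A (.boxf A))
  | mp {A B} : GLTriv (.imp A B) → GLTriv A → GLTriv B
  | necp {A} : GLTriv A → GLTriv (.boxp A)

/-- Formulas of the unimodal language `L_f` (only `□f`, written `box`). -/
inductive LfForm : Type
  | var : ℕ → LfForm
  | neg : LfForm → LfForm
  | and : LfForm → LfForm → LfForm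
  | or : LfForm → LfForm → LfForm
  | imp : LfForm → LfForm → LfForm
  | box : LfForm → LfForm
  deriving DecidableEq

/-- `◇f A := ¬□f¬A` in `L_f`. -/
def LfForm.dia (A : LfForm) : LfForm := .neg (.box (.neg A))

/-- Propositional tautologies of `L_f`. -/
def TautLf (A : LfForm) : Prop :=
  ∀ f : LfForm → Bool,
    (∀ B, f (.neg B) = !(f B)) →
    (∀ B C, f (.and B C) = (f B && f C)) →
    (∀ B C, f (.or B C) = (f B || f C)) →
    (∀ B C, f (.imp B C) = (!(f B) || f C)) →
    f A = true

/-- The modal logic `S4.2` in the language `L_f`. -/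
inductive S42 : LfForm → Prop
  | taut {A} : TautLf A → S42 A
  | k (A B) : S42 (.imp (.box (.imp A B)) (.imp (.box A) (.box B)))
  | t (A) : S42 (.imp (.box A) A)
  | four (A) : S42 (.imp (.box A) (.box (.box A)))
  | dot2 (A) : S42 (.imp (LfForm.dia (.box A)) (.box (LfForm.dia A)))
  | mp {A B} : S42 (.imp A B) → S42 A → S42 B
  | nec {A} : S42 A → S42 (.box A)

/-- Embedding of `L_f` into `L_pf` (`box ↦ □f`). -/
def LfForm.toFormula : LfForm → Formula
  | .var n => .var n
  | .neg A => .neg A.toFormula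
  | .and A B => .and A.toFormula B.toFormula
  | .or A B => .or A.toFormula B.toFormula
  | .imp A B => .imp A.toFormula B.toFormula
  | .box A => .boxf A.toFormula

/-- `L_pf`-formulas with no occurrence of `□p`, i.e. `L_f`-formulas. -/
inductive NoBoxp : Formula → Prop
  | var (n) : NoBoxp (.var n)
  | neg {A} : NoBoxp A → NoBoxp (.neg A)
  | and {A B} : NoBoxp A → NoBoxp B → NoBoxp (.and A B)
  | or {A B} : NoBoxp A → NoBoxp B → NoBoxp (.or A B)
  | imp {A B} : NoBoxp A → NoBoxp B → NoBoxp (.imp A B)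
  | boxf {A} : NoBoxp A → NoBoxp (.boxf A)

/-- Clauses of `□p`-CNF: disjunctions `□p D_0 ∨ ⋯ ∨ □p D_{k-1} ∨ ◇p E ∨ F`
with `F` an `L_f`-formula (each of the three parts may be absent). -/
inductive IsClause : Formula → Prop
  | lf {F} : NoBoxp F → IsClause F
  | dia (E : Formula) : IsClause (diap E)
  | diaOr (E : Formula) {F} : NoBoxp F → IsClause (.or (diap E) F)
  | boxAlone (D : Formula) : IsClause (.boxp D)
  | boxOr (D : Formula) {C} : IsClause C → IsClause (.or (.boxp D) C)

/-- A formula in `□p`-conjunctive normal form: a conjunction of clauses. -/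
inductive IsCNF : Formula → Prop
  | clause {C} : IsClause C → IsCNF C
  | and {A B} : IsCNF A → IsCNF B → IsCNF (.and A B)

/-- The `□p`-modal degree of a formula. -/
def deg : Formula → ℕ
  | .var _ => 0
  | .neg A => deg A
  | .and A B => max (deg A) (deg B)
  | .or A B => max (deg A) (deg B)
  | .imp A B => max (deg A) (deg B)
  | .boxf A => deg A
  | .boxp A => deg A + 1

section Completeness
open Classical

/-! ### Propositional toolkit for PF -/

private lemma pf_mp2 {A B C : Formula} (h : PF (.imp A (.imp B C))) (ha : PF A) (hb : PF B) :
    PF C := (h.mp ha).mp hb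

private lemma pf_imp_trans {A B C : Formula} (h1 : PF (.imp A B)) (h2 : PF (.imp B C)) :
    PF (.imp A C) := by
  have t : Taut (.imp (.imp A B) (.imp (.imp B C) (.imp A C))) := by
    intro f hn ha ho hi
    simp only [hi]
    cases f A <;> cases f B <;> cases f C <;> rfl
  exact ((PF.taut t).mp h1).mp h2

private lemma pf_and_left {A B : Formula} : PF (.imp (.and A B) A) := by
  apply PF.taut; intro f hn ha ho hi
  simp only [hi, ha]; cases f A <;> cases f B <;> rfl

private lemma pf_and_right {A B : Formula} : PF (.imp (.and A B) B) := by
  apply PF.taut; intro f hn ha ho hi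
  simp only [hi, ha]; cases f A <;> cases f B <;> rfl

private lemma pf_imp_and {X A B : Formula} (h1 : PF (.imp X A)) (h2 : PF (.imp X B)) :
    PF (.imp X (.and A B)) := by
  have t : Taut (.imp (.imp X A) (.imp (.imp X B) (.imp X (.and A B)))) := by
    intro f hn ha ho hi
    simp only [hi, ha]
    cases f X <;> cases f A <;> cases f B <;> rfl
  exact pf_mp2 (PF.taut t) h1 h2

private lemma pf_imp_mp {X A B : Formula} (h1 : PF (.imp X (.imp A B))) (h2 : PF (.imp X A)) :
    PF (.imp X B) := by
  have t : Taut (.imp (.imp X (.imp A B)) (.imp (.imp X A) (.imp X B))) := by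
    intro f hn ha ho hi
    simp only [hi]
    cases f X <;> cases f A <;> cases f B <;> rfl
  exact pf_mp2 (PF.taut t) h1 h2

private lemma pf_imp_self {A : Formula} : PF (.imp A A) := by
  apply PF.taut; intro f hn ha ho hi; simp only [hi]; cases f A <;> rfl

private lemma pf_imp_const {X A : Formula} (h : PF A) : PF (.imp X A) := by
  have t : Taut (.imp A (.imp X A)) := by
    intro f hn ha ho hi; simp only [hi]; cases f A <;> cases f X <;> rfl
  exact (PF.taut t).mp h

/-! ### conjList toolkit -/

private lemma pf_top : PF (conjList []) := pf_imp_self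

private lemma pf_conj_cons {A : Formula} {L : List Formula} :
    PF (.imp (.and A (conjList L)) (conjList (A :: L))) := by
  cases L with
  | nil => exact pf_and_left
  | cons C t => exact pf_imp_self

private lemma pf_cons_conj {A : Formula} {L : List Formula} :
    PF (.imp (conjList (A :: L)) (.and A (conjList L))) := by
  cases L with
  | nil => exact pf_imp_and pf_imp_self (pf_imp_const pf_top)
  | cons C t => exact pf_imp_self

private lemma conj_elem {C : Formula} {L : List Formula} (h : C ∈ L) :
    PF (.imp (conjList L) C) := by
  induction L with
  | nil => cases h
  | cons A t ih =>
    rcases List.mem_cons.1 h with rfl | h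
    · exact pf_imp_trans pf_cons_conj pf_and_left
    · exact pf_imp_trans (pf_imp_trans pf_cons_conj pf_and_right) (ih h)

private lemma conj_intro {X : Formula} {L : List Formula} (h : ∀ C ∈ L, PF (.imp X C)) :
    PF (.imp X (conjList L)) := by
  induction L with
  | nil => exact pf_imp_const pf_top
  | cons A t ih =>
    refine pf_imp_trans (pf_imp_and (h A (by simp)) (ih fun C hC => h C (by simp [hC])))
      pf_conj_cons

private lemma conj_mono {L M : List Formula} (h : ∀ C ∈ L, C ∈ M) :
    PF (.imp (conjList M) (conjList L)) :=
  conj_intro fun C hC => conj_elem (h C hC)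

/-! ### Modal toolkit -/

private lemma mono_p {A B : Formula} (h : PF (.imp A B)) :
    PF (.imp (.boxp A) (.boxp B)) := (PF.kp A B).mp (PF.necp h)

private lemma mono_f {A B : Formula} (h : PF (.imp A B)) :
    PF (.imp (.boxf A) (.boxf B)) := (PF.kf A B).mp (PF.necf h)

private lemma collect_p {A B : Formula} :
    PF (.imp (.and (.boxp A) (.boxp B)) (.boxp (.and A B))) := by
  have t : Taut (.imp A (.imp B (.and A B))) := by
    intro f hn ha ho hi; simp only [hi, ha]; cases f A <;> cases f B <;> rfl
  have h1 : PF (.imp (.boxp A) (.imp (.boxp B) (.boxp (.and A B)))) :=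
    pf_imp_trans (mono_p (PF.taut t)) (PF.kp B (.and A B))
  exact pf_imp_mp (pf_imp_trans pf_and_left h1) pf_and_right

private lemma collect_f {A B : Formula} :
    PF (.imp (.and (.boxf A) (.boxf B)) (.boxf (.and A B))) := by
  have t : Taut (.imp A (.imp B (.and A B))) := by
    intro f hn ha ho hi; simp only [hi, ha]; cases f A <;> cases f B <;> rfl
  have h1 : PF (.imp (.boxf A) (.imp (.boxf B) (.boxf (.and A B)))) :=
    pf_imp_trans (mono_f (PF.taut t)) (PF.kf B (.and A B))
  exact pf_imp_mp (pf_imp_trans pf_and_left h1) pf_and_right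

/-- GL's 4 axiom for `□p`, derived from Löb. -/
private lemma pf_fourp {A : Formula} : PF (.imp (.boxp A) (.boxp (.boxp A))) := by
  set B : Formula := .and A (.boxp A) with hB
  have h1 : PF (.imp (.boxp B) (.boxp A)) := mono_p pf_and_left
  -- ⊢ A → (□B → B)
  have t : Taut (.imp (.imp (.boxp B) (.boxp A))
      (.imp A (.imp (.boxp B) (.and A (.boxp A))))) := by
    intro f hn ha ho hi; simp only [hi, ha]
    cases f A <;> cases f (Formula.boxp B) <;> cases f (Formula.boxp A) <;> rfl
  have h2 : PF (.imp A (.imp (.boxp B) B)) := (PF.taut t).mp h1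
  have h3 : PF (.imp (.boxp A) (.boxp (.imp (.boxp B) B))) := mono_p h2
  have h4 : PF (.imp (.boxp A) (.boxp B)) := pf_imp_trans h3 (PF.lob B)
  exact pf_imp_trans h4 (mono_p pf_and_right)

/-- Shape lemma: a conjunction of `□f`-formulas implies its own `□f`. -/
private lemma boxf_conj_self {L : List Formula} (h : ∀ D ∈ L, ∃ C, D = .boxf C) :
    PF (.imp (conjList L) (.boxf (conjList L))) := by
  induction L with
  | nil => exact pf_imp_const (PF.necf pf_top)
  | cons D t ih =>
    obtain ⟨C, rfl⟩ := h D (by simp)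
    have ih' := ih fun D hD => h D (by simp [hD])
    have h1 : PF (.imp (conjList (.boxf C :: t)) (.and (.boxf (.boxf C)) (.boxf (conjList t)))) :=
      pf_imp_trans pf_cons_conj
        (pf_imp_and (pf_imp_trans pf_and_left (PF.fourf C)) (pf_imp_trans pf_and_right ih'))
    exact pf_imp_trans (pf_imp_trans h1 collect_f) (mono_f pf_conj_cons)

/-- A conjunction of `□p`-formulas implies its own `□p`. -/
private lemma boxp_conj_self {L : List Formula} (h : ∀ D ∈ L, ∃ C, D = .boxp C) :
    PF (.imp (conjList L) (.boxp (conjList L))) := by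
  induction L with
  | nil => exact pf_imp_const (PF.necp pf_top)
  | cons D t ih =>
    obtain ⟨C, rfl⟩ := h D (by simp)
    have ih' := ih fun D hD => h D (by simp [hD])
    have h1 : PF (.imp (conjList (.boxp C :: t)) (.and (.boxp (.boxp C)) (.boxp (conjList t)))) :=
      pf_imp_trans pf_cons_conj
        (pf_imp_and (pf_imp_trans pf_and_left pf_fourp) (pf_imp_trans pf_and_right ih'))
    exact pf_imp_trans (pf_imp_trans h1 collect_p) (mono_p pf_conj_cons)

/-- `⋀ □p Cᵢ → □p ⋀ □f Cᵢ`. -/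
private lemma boxp_to_boxp_boxf {L : List Formula} :
    PF (.imp (conjList (L.map .boxp)) (.boxp (conjList (L.map .boxf)))) := by
  induction L with
  | nil => exact pf_imp_const (PF.necp pf_top)
  | cons C t ih =>
    have h1 : PF (.imp (conjList (.boxp C :: t.map .boxp))
        (.and (.boxp (.boxf C)) (.boxp (conjList (t.map .boxf))))) :=
      pf_imp_trans pf_cons_conj
        (pf_imp_and (pf_imp_trans pf_and_left (PF.pf3 C)) (pf_imp_trans pf_and_right ih))
    simpa using pf_imp_trans (pf_imp_trans h1 collect_p) (mono_p pf_conj_cons)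

/-! ### Deducibility, consistency, maximal consistent sets -/

private def falsum : Formula := .neg (.imp (.var 0) (.var 0))

private def Deduc (Γ : Set Formula) (B : Formula) : Prop :=
  ∃ L : List Formula, (∀ C ∈ L, C ∈ Γ) ∧ PF (.imp (conjList L) B)

private def Con (Γ : Set Formula) : Prop := ¬ Deduc Γ falsum

private def IsMCS (Γ : Set Formula) : Prop := Con Γ ∧ ∀ B, B ∈ Γ ∨ .neg B ∈ Γ

private lemma deduc_of_pf {Γ : Set Formula} {B : Formula} (h : PF B) : Deduc Γ B :=
  ⟨[], by simp, pf_imp_const h⟩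

private lemma deduc_of_mem {Γ : Set Formula} {B : Formula} (h : B ∈ Γ) : Deduc Γ B :=
  ⟨[B], by simpa, conj_elem (by simp)⟩

private lemma deduc_mp {Γ : Set Formula} {A B : Formula}
    (h1 : Deduc Γ (.imp A B)) (h2 : Deduc Γ A) : Deduc Γ B := by
  obtain ⟨L1, hL1, hp1⟩ := h1
  obtain ⟨L2, hL2, hp2⟩ := h2
  refine ⟨L1 ++ L2, ?_, ?_⟩
  · intro C hC
    rcases List.mem_append.1 hC with h | h
    exacts [hL1 C h, hL2 C h]
  have e1 : PF (.imp (conjList (L1 ++ L2)) (.imp A B)) :=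
    pf_imp_trans (conj_mono fun C hC => List.mem_append.2 (Or.inl hC)) hp1
  have e2 : PF (.imp (conjList (L1 ++ L2)) A) :=
    pf_imp_trans (conj_mono fun C hC => List.mem_append.2 (Or.inr hC)) hp2
  exact pf_imp_mp e1 e2

private lemma deduc_mono {Γ Δ : Set Formula} {B : Formula} (h : Γ ⊆ Δ) (hd : Deduc Γ B) :
    Deduc Δ B := by
  obtain ⟨L, hL, hp⟩ := hd
  exact ⟨L, fun C hC => h (hL C hC), hp⟩

/-- Deduction theorem. -/
private lemma deduc_insert {Γ : Set Formula} {A B : Formula}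
    (h : Deduc (insert A Γ) B) : Deduc Γ (.imp A B) := by
  obtain ⟨L, hL, hp⟩ := h
  refine ⟨L.filter (fun C => C ≠ A), ?_, ?_⟩
  · intro C hC
    have := List.mem_filter.1 hC
    rcases hL C this.1 with h | h
    · exact absurd h (by simpa using this.2)
    · exact h
  · set L' := L.filter (fun C => C ≠ A) with hL'
    have hmono : PF (.imp (conjList (A :: L')) (conjList L)) := by
      refine conj_mono ?_
      intro C hC
      by_cases hCA : C = A
      · simp [hCA]
      · refine List.mem_cons.2 (Or.inr ?_)
        exact List.mem_filter.2 ⟨hC, by simpa using hCA⟩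
    have h1 : PF (.imp (.and A (conjList L')) B) :=
      pf_imp_trans (pf_imp_trans pf_conj_cons hmono) hp
    -- export: ⊢ ⋀L' → (A → B)
    have t : Taut (.imp (.imp (.and A (conjList L')) B)
        (.imp (conjList L') (.imp A B))) := by
      intro f hn ha ho hi; simp only [hi, ha]
      cases f A <;> cases f (conjList L') <;> cases f B <;> rfl
    exact (PF.taut t).mp h1

private lemma not_con_insert {Γ : Set Formula} {A : Formula}
    (h : ¬ Con (insert A Γ)) : Deduc Γ (.neg A) := by
  rw [Con, not_not] at h
  have h1 : Deduc Γ (.imp A falsum) := deduc_insert h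
  have t : Taut (.imp (.imp A falsum) (.neg A)) := by
    intro f hn ha ho hi; simp only [hi, hn, falsum]
    cases f A <;> cases f (Formula.var 0) <;> rfl
  obtain ⟨L, hL, hp⟩ := h1
  exact ⟨L, hL, pf_imp_trans hp (PF.taut t)⟩

private lemma con_of_deduc_neg {Γ : Set Formula} {A : Formula}
    (hc : Con Γ) (hA : Deduc Γ A) (hnA : Deduc Γ (.neg A)) : False := by
  apply hc
  have t : Taut (.imp A (.imp (.neg A) falsum)) := by
    intro f hn ha ho hi; simp only [hi, hn, falsum]
    cases f A <;> cases f (Formula.var 0) <;> rfl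
  exact deduc_mp (deduc_mp (deduc_of_pf (PF.taut t)) hA) hnA

/-- Members of an MCS are closed under deduction. -/
private lemma mcs_closed {Γ : Set Formula} (h : IsMCS Γ) {B : Formula}
    (hd : Deduc Γ B) : B ∈ Γ := by
  rcases h.2 B with hB | hB
  · exact hB
  · exact (con_of_deduc_neg h.1 hd (deduc_of_mem hB)).elim

private lemma mcs_neg_iff {Γ : Set Formula} (h : IsMCS Γ) {B : Formula} :
    .neg B ∈ Γ ↔ B ∉ Γ := by
  constructor
  · intro h1 h2
    exact con_of_deduc_neg h.1 (deduc_of_mem h2) (deduc_of_mem h1)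
  · intro h1
    rcases h.2 B with h2 | h2
    · exact absurd h2 h1
    · exact h2

private lemma mcs_mem_of_imp {Γ : Set Formula} (h : IsMCS Γ) {A B : Formula}
    (hp : PF (.imp A B)) (hA : A ∈ Γ) : B ∈ Γ :=
  mcs_closed h (deduc_mp (deduc_of_pf hp) (deduc_of_mem hA))

private lemma mcs_and_iff {Γ : Set Formula} (h : IsMCS Γ) {A B : Formula} :
    .and A B ∈ Γ ↔ (A ∈ Γ ∧ B ∈ Γ) := by
  constructor
  · intro hab
    exact ⟨mcs_mem_of_imp h pf_and_left hab, mcs_mem_of_imp h pf_and_right hab⟩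
  · rintro ⟨hA, hB⟩
    have t : Taut (.imp A (.imp B (.and A B))) := by
      intro f hn ha ho hi; simp only [hi, ha]; cases f A <;> cases f B <;> rfl
    exact mcs_closed h (deduc_mp (deduc_mp (deduc_of_pf (PF.taut t))
      (deduc_of_mem hA)) (deduc_of_mem hB))

private lemma mcs_imp_iff {Γ : Set Formula} (h : IsMCS Γ) {A B : Formula} :
    .imp A B ∈ Γ ↔ (A ∈ Γ → B ∈ Γ) := by
  constructor
  · intro hab hA
    exact mcs_closed h (deduc_mp (deduc_of_mem hab) (deduc_of_mem hA))
  · intro hi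
    by_cases hA : A ∈ Γ
    · have t : Taut (.imp B (.imp A B)) := by
        intro f hn ha ho hi; simp only [hi]; cases f A <;> cases f B <;> rfl
      exact mcs_mem_of_imp h (PF.taut t) (hi hA)
    · have hnA : .neg A ∈ Γ := (mcs_neg_iff h).2 hA
      have t : Taut (.imp (.neg A) (.imp A B)) := by
        intro f hn ha ho hi; simp only [hi, hn]; cases f A <;> cases f B <;> rfl
      exact mcs_mem_of_imp h (PF.taut t) hnA

private lemma mcs_or_iff {Γ : Set Formula} (h : IsMCS Γ) {A B : Formula} :
    .or A B ∈ Γ ↔ (A ∈ Γ ∨ B ∈ Γ) := by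
  constructor
  · intro hab
    by_contra hc
    push_neg at hc
    have hnA : .neg A ∈ Γ := (mcs_neg_iff h).2 hc.1
    have hnB : .neg B ∈ Γ := (mcs_neg_iff h).2 hc.2
    have t : Taut (.imp (.neg A) (.imp (.neg B) (.neg (.or A B)))) := by
      intro f hn ha ho hi; simp only [hi, hn, ho]; cases f A <;> cases f B <;> rfl
    have : .neg (.or A B) ∈ Γ :=
      mcs_closed h (deduc_mp (deduc_mp (deduc_of_pf (PF.taut t))
        (deduc_of_mem hnA)) (deduc_of_mem hnB))
    exact (mcs_neg_iff h).1 this hab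
  · rintro (hA | hA)
    · have t : Taut (.imp A (.or A B)) := by
        intro f hn ha ho hi; simp only [hi, ho]; cases f A <;> cases f B <;> rfl
      exact mcs_mem_of_imp h (PF.taut t) hA
    · have t : Taut (.imp B (.or A B)) := by
        intro f hn ha ho hi; simp only [hi, ho]; cases f A <;> cases f B <;> rfl
      exact mcs_mem_of_imp h (PF.taut t) hA

/-! ### Lindenbaum -/

private lemma chain_list_sub {c : Set (Set Formula)} (hc : IsChain (· ⊆ ·) c)
    (hne : c.Nonempty) (L : List Formula) (hL : ∀ C ∈ L, C ∈ ⋃₀ c) :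
    ∃ s ∈ c, ∀ C ∈ L, C ∈ s := by
  induction L with
  | nil => exact ⟨hne.choose, hne.choose_spec, by simp⟩
  | cons A t ih =>
    obtain ⟨s, hs, hst⟩ := ih (fun C hC => hL C (by simp [hC]))
    obtain ⟨s', hs', hAs'⟩ := hL A (by simp)
    by_cases hss : s = s'
    · exact ⟨s, hs, by
        intro C hC
        rcases List.mem_cons.1 hC with rfl | hC
        · exact hss ▸ hAs'
        · exact hst C hC⟩
    rcases hc hs hs' hss with hsub | hsub
    · exact ⟨s', hs', by
        intro C hC
        rcases List.mem_cons.1 hC with rfl | hC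
        · exact hAs'
        · exact hsub (hst C hC)⟩
    · exact ⟨s, hs, by
        intro C hC
        rcases List.mem_cons.1 hC with rfl | hC
        · exact hsub hAs'
        · exact hst C hC⟩

private lemma lindenbaum {Γ : Set Formula} (h : Con Γ) :
    ∃ Δ, Γ ⊆ Δ ∧ IsMCS Δ := by
  obtain ⟨m, hΓm, hm⟩ := zorn_subset_nonempty {Δ : Set Formula | Con Δ} (by
    intro c hcS hchain hcne
    refine ⟨⋃₀ c, ?_, fun s hs => Set.subset_sUnion_of_mem hs⟩
    intro hd
    obtain ⟨L, hL, hp⟩ := hd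
    obtain ⟨s, hs, hLs⟩ := chain_list_sub hchain hcne L hL
    exact hcS hs ⟨L, hLs, hp⟩) Γ h
  refine ⟨m, hΓm, hm.1, fun B => ?_⟩
  by_contra hB
  push_neg at hB
  have h1 : ¬ Con (insert B m) := by
    intro hcon
    have := hm.2 hcon (Set.subset_insert B m)
    exact hB.1 (this (Set.mem_insert B m))
  have h2 : ¬ Con (insert (.neg B) m) := by
    intro hcon
    have := hm.2 hcon (Set.subset_insert (.neg B) m)
    exact hB.2 (this (Set.mem_insert (.neg B) m))
  exact con_of_deduc_neg hm.1 (not_con_insert h1) (not_con_insert h2)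


attribute [local instance] Classical.propDecidable

private lemma pf_dne {A : Formula} : PF (.imp (.neg (.neg A)) A) := by
  apply PF.taut; intro f hn ha ho hi; simp only [hi, hn]; cases f A <;> rfl

private lemma pf_dni {A : Formula} : PF (.imp A (.neg (.neg A))) := by
  apply PF.taut; intro f hn ha ho hi; simp only [hi, hn]; cases f A <;> rfl

private lemma pf_contrapose {A B : Formula} (h : PF (.imp A B)) :
    PF (.imp (.neg B) (.neg A)) := by
  have t : Taut (.imp (.imp A B) (.imp (.neg B) (.neg A))) := by
    intro f hn ha ho hi; simp only [hi, hn]; cases f A <;> cases f B <;> rfl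
  exact (PF.taut t).mp h

private lemma conj_append {L1 L2 : List Formula} :
    PF (.imp (.and (conjList L1) (conjList L2)) (conjList (L1 ++ L2))) := by
  refine conj_intro ?_
  intro C hC
  rcases List.mem_append.1 hC with h | h
  · exact pf_imp_trans pf_and_left (conj_elem h)
  · exact pf_imp_trans pf_and_right (conj_elem h)

private lemma pf_and_map {A X Y : Formula} (h : PF (.imp X Y)) :
    PF (.imp (.and A X) (.and A Y)) :=
  pf_imp_and pf_and_left (pf_imp_trans pf_and_right h)

/-! ### The canonical `≼`-relation on MCSs -/

private def Sc (x y : Set Formula) : Prop := ∀ C, .boxf C ∈ x → .boxf C ∈ y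

private lemma sc_refl (x : Set Formula) : Sc x x := fun _ h => h

private lemma sc_trans {x y z : Set Formula} (h1 : Sc x y) (h2 : Sc y z) : Sc x z :=
  fun C hC => h2 C (h1 C hC)

/-- `□p`-formulas have constant truth value along `Sc`. -/
private lemma sc_boxp_iff {x y : Set Formula} (hx : IsMCS x) (hy : IsMCS y)
    (hxy : Sc x y) (C : Formula) : .boxp C ∈ x ↔ .boxp C ∈ y := by
  constructor
  · intro h
    have h1 : .boxf (.boxp C) ∈ x := mcs_mem_of_imp hx (PF.pf1 C) h
    exact mcs_mem_of_imp hy (PF.tf _) (hxy _ h1)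
  · intro h
    by_contra hc
    have hn : .neg (.boxp C) ∈ x := (mcs_neg_iff hx).2 hc
    have s1 : PF (.imp (.neg (.boxp C)) (diap (.neg C))) :=
      pf_contrapose (mono_p pf_dne)
    have s2 : PF (.imp (diap (.neg C)) (.boxf (diap (.neg C)))) := PF.pf2 (.neg C)
    have s3 : PF (.imp (.boxf (diap (.neg C))) (.boxf (.neg (.boxp C)))) :=
      mono_f (pf_contrapose (mono_p pf_dni))
    have h2 : .boxf (.neg (.boxp C)) ∈ x :=
      mcs_mem_of_imp hx (pf_imp_trans s1 (pf_imp_trans s2 s3)) hn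
    have h3 : .neg (.boxp C) ∈ y := mcs_mem_of_imp hy (PF.tf _) (hxy _ h2)
    exact (mcs_neg_iff hy).1 h3 h

/-- `Sc` implies the dual `◇f`-link. -/
private lemma sc_dual {x y : Set Formula} (hx : IsMCS x) (hy : IsMCS y)
    (hxy : Sc x y) {E : Formula} (hE : E ∈ y) : .neg (.boxf (.neg E)) ∈ x := by
  by_contra hc
  have h1 : .boxf (.neg E) ∈ x :=
    mcs_mem_of_imp hx pf_dne ((mcs_neg_iff hx).2 hc)
  have h2 : .neg E ∈ y := mcs_mem_of_imp hy (PF.tf _) (hxy _ h1)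
  exact (mcs_neg_iff hy).1 h2 hE

/-- Existence lemma for `◇f`. -/
private lemma diaf_exists {y : Set Formula} (hy : IsMCS y) {B : Formula}
    (h : .boxf B ∉ y) : ∃ z, IsMCS z ∧ Sc y z ∧ B ∉ z := by
  set Γz : Set Formula := insert (.neg B) {D | (∃ C, D = .boxf C) ∧ D ∈ y} with hΓz
  have hcon : Con Γz := by
    rintro ⟨L, hL, hp⟩
    set L' := L.filter (fun C => C ≠ .neg B) with hL'
    have hmem : ∀ D ∈ L', (∃ C, D = .boxf C) ∧ D ∈ y := by
      intro D hD
      have h1 := List.mem_filter.1 hD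
      rcases hL D h1.1 with h2 | h2
      · exact absurd h2 (by simpa using h1.2)
      · exact h2
    have hmono : PF (.imp (conjList (.neg B :: L')) (conjList L)) := by
      refine conj_mono ?_
      intro C hC
      by_cases hCB : C = .neg B
      · simp [hCB]
      · exact List.mem_cons.2 (Or.inr (List.mem_filter.2 ⟨hC, by simpa using hCB⟩))
    have h1 : PF (.imp (.and (.neg B) (conjList L')) falsum) :=
      pf_imp_trans pf_conj_cons (pf_imp_trans hmono hp)
    have t : Taut (.imp (.imp (.and (.neg B) (conjList L')) falsum)
        (.imp (conjList L') B)) := by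
      intro f hn ha ho hi; simp only [hi, hn, ha, falsum]
      cases f B <;> cases f (conjList L') <;> cases f (Formula.var 0) <;> rfl
    have h2 : PF (.imp (conjList L') B) := (PF.taut t).mp h1
    have h3 : PF (.imp (conjList L') (.boxf B)) :=
      pf_imp_trans (boxf_conj_self (fun D hD => (hmem D hD).1)) (mono_f h2)
    have h4 : Deduc y (.boxf B) :=
      ⟨L', fun D hD => (hmem D hD).2, h3⟩
    exact h (mcs_closed hy h4)
  obtain ⟨z, hΓzz, hz⟩ := lindenbaum hcon
  refine ⟨z, hz, ?_, ?_⟩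
  · intro C hC
    exact hΓzz (Set.mem_insert_iff.2 (Or.inr ⟨⟨C, rfl⟩, hC⟩))
  · exact (mcs_neg_iff hz).1 (hΓzz (Set.mem_insert _ _))

/-- Directedness of `Sc` (via the `.2` axiom). -/
private lemma sc_directed {x y z : Set Formula} (hx : IsMCS x) (hy : IsMCS y)
    (hz : IsMCS z) (hxy : Sc x y) (hxz : Sc x z) :
    ∃ w, IsMCS w ∧ Sc y w ∧ Sc z w := by
  set Γw : Set Formula :=
    {D | (∃ C, D = .boxf C) ∧ D ∈ y} ∪ {D | (∃ C, D = .boxf C) ∧ D ∈ z} with hΓw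
  have hcon : Con Γw := by
    rintro ⟨L, hL, hp⟩
    set Ly := L.filter (fun D => D ∈ y) with hLy
    set Lz := L.filter (fun D => D ∉ y) with hLz
    have hmemy : ∀ D ∈ Ly, (∃ C, D = .boxf C) ∧ D ∈ y := by
      intro D hD
      have h1 := List.mem_filter.1 hD
      have h2 : D ∈ y := by simpa using h1.2
      rcases hL D h1.1 with h3 | h3
      · exact ⟨h3.1, h2⟩
      · exact ⟨h3.1, h2⟩
    have hmemz : ∀ D ∈ Lz, (∃ C, D = .boxf C) ∧ D ∈ z := by
      intro D hD
      have h1 := List.mem_filter.1 hD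
      have h2 : D ∉ y := by simpa using h1.2
      rcases hL D h1.1 with h3 | h3
      · exact absurd h3.2 h2
      · exact h3
    set γ := conjList Ly with hγ
    set δ := conjList Lz with hδ
    have hsplit : PF (.imp (.and γ δ) (conjList L)) := by
      refine conj_intro ?_
      intro C hC
      by_cases hCy : C ∈ y
      · exact pf_imp_trans pf_and_left (conj_elem (List.mem_filter.2 ⟨hC, by simpa⟩))
      · exact pf_imp_trans pf_and_right (conj_elem (List.mem_filter.2 ⟨hC, by simpa⟩))
    have hbot : PF (.imp (.and γ δ) falsum) := pf_imp_trans hsplit hp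
    have t : Taut (.imp (.imp (.and γ δ) falsum) (.imp δ (.neg γ))) := by
      intro f hn ha ho hi; simp only [hi, hn, ha, falsum]
      cases f γ <;> cases f δ <;> cases f (Formula.var 0) <;> rfl
    have hδnγ : PF (.imp δ (.neg γ)) := (PF.taut t).mp hbot
    -- y contains □fγ
    have hboxγ : .boxf γ ∈ y :=
      mcs_closed hy (deduc_mp (deduc_of_pf (boxf_conj_self fun D hD => (hmemy D hD).1))
        ⟨Ly, fun D hD => (hmemy D hD).2, pf_imp_self⟩)
    -- x contains ◇f□fγ
    have hdia : .neg (.boxf (.neg (.boxf γ))) ∈ x := sc_dual hx hy hxy hboxγ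
    -- by dot2f, x contains □f◇fγ, hence z contains ◇fγ
    have hdot : .boxf (diaf γ) ∈ x := mcs_mem_of_imp hx (PF.dot2f γ) hdia
    have hdiaz : .neg (.boxf (.neg γ)) ∈ z := mcs_mem_of_imp hz (PF.tf _) (hxz _ hdot)
    -- but z proves □f¬γ
    have hboxnγ : Deduc z (.boxf (.neg γ)) :=
      deduc_mp (deduc_of_pf (pf_imp_trans (boxf_conj_self fun D hD => (hmemz D hD).1)
        (mono_f hδnγ))) ⟨Lz, fun D hD => (hmemz D hD).2, pf_imp_self⟩
    exact con_of_deduc_neg hz.1 hboxnγ (deduc_of_mem hdiaz)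
  obtain ⟨w, hΓww, hw⟩ := lindenbaum hcon
  exact ⟨w, hw, fun C hC => hΓww (Or.inl ⟨⟨C, rfl⟩, hC⟩),
    fun C hC => hΓww (Or.inr ⟨⟨C, rfl⟩, hC⟩)⟩

/-- GL-style existence lemma for `◇p`. -/
private lemma glp_exists {y : Set Formula} (hy : IsMCS y) {B : Formula}
    (h : .boxp B ∉ y) (Lc : List Formula) (hLc : ∀ C ∈ Lc, .boxp C ∈ y) :
    ∃ z, IsMCS z ∧ .neg B ∈ z ∧ .boxp B ∈ z ∧
      ∀ C ∈ Lc, .boxp C ∈ z ∧ .boxf C ∈ z := by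
  set γp := conjList (Lc.map .boxp) with hγp
  set γf := conjList (Lc.map .boxf) with hγf
  set Γz : Set Formula := insert (.neg B) (insert (.boxp B)
    ({D | ∃ C ∈ Lc, D = .boxp C} ∪ {D | ∃ C ∈ Lc, D = .boxf C})) with hΓz
  have hcon : Con Γz := by
    rintro ⟨L, hL, hp⟩
    set M : List Formula := .neg B :: .boxp B :: (Lc.map .boxp ++ Lc.map .boxf) with hM
    have hLM : ∀ C ∈ L, C ∈ M := by
      intro C hC
      rcases hL C hC with h1 | h1
      · simp [hM, h1]
      · rcases h1 with h1 | h1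
        · simp [hM, h1]
        · rcases h1 with ⟨D, hD, rfl⟩ | ⟨D, hD, rfl⟩
          · exact List.mem_cons.2 (Or.inr (List.mem_cons.2 (Or.inr
              (List.mem_append.2 (Or.inl (List.mem_map.2 ⟨D, hD, rfl⟩))))))
          · exact List.mem_cons.2 (Or.inr (List.mem_cons.2 (Or.inr
              (List.mem_append.2 (Or.inr (List.mem_map.2 ⟨D, hD, rfl⟩))))))
    have hbig : PF (.imp (.and (.neg B) (.and (.boxp B) (.and γp γf)))
        (conjList M)) := by
      refine pf_imp_trans (pf_and_map (pf_and_map conj_append)) ?_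
      refine pf_imp_trans (pf_and_map pf_conj_cons) pf_conj_cons
    have hbot : PF (.imp (.and (.neg B) (.and (.boxp B) (.and γp γf))) falsum) :=
      pf_imp_trans hbig (pf_imp_trans (conj_mono hLM) hp)
    have t : Taut (.imp (.imp (.and (.neg B) (.and (.boxp B) (.and γp γf))) falsum)
        (.imp (.and γp γf) (.imp (.boxp B) B))) := by
      intro f hn ha ho hi; simp only [hi, hn, ha, falsum]
      cases f B <;> cases f (Formula.boxp B) <;> cases f γp <;> cases f γf <;>
        cases f (Formula.var 0) <;> rfl
    have h2 : PF (.imp (.and γp γf) (.imp (.boxp B) B)) := (PF.taut t).mp hbot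
    have h4 : PF (.imp γp (.boxp (.and γp γf))) :=
      pf_imp_trans (pf_imp_and (boxp_conj_self (by simp [hγp])) boxp_to_boxp_boxf)
        collect_p
    have h5 : PF (.imp γp (.boxp B)) :=
      pf_imp_trans h4 (pf_imp_trans (mono_p h2) (PF.lob B))
    have h6 : Deduc y (.boxp B) :=
      deduc_mp (deduc_of_pf h5)
        ⟨Lc.map .boxp, by
          intro D hD
          obtain ⟨C, hC, rfl⟩ := List.mem_map.1 hD
          exact hLc C hC, pf_imp_self⟩
    exact h (mcs_closed hy h6)
  obtain ⟨z, hΓzz, hz⟩ := lindenbaum hcon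
  refine ⟨z, hz, hΓzz (Set.mem_insert _ _),
    hΓzz (Set.mem_insert_iff.2 (Or.inr (Set.mem_insert _ _))), ?_⟩
  intro C hC
  constructor
  · exact hΓzz (by right; right; exact Or.inl ⟨C, hC, rfl⟩)
  · exact hΓzz (by right; right; exact Or.inr ⟨C, hC, rfl⟩)


/-! ### Subformula machinery -/

private lemma mem_subf_self (A : Formula) : A ∈ subf A := by
  cases A <;> simp [subf]

private lemma subf_trans : ∀ {A B C : Formula}, B ∈ subf A → C ∈ subf B → C ∈ subf A := by
  intro A
  induction A with
  | var n =>
    intro B C hB hC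
    simp [subf] at hB
    subst hB; simpa [subf] using hC
  | neg A ih =>
    intro B C hB hC
    rcases List.mem_cons.1 hB with rfl | hB
    · exact hC
    · exact List.mem_cons.2 (Or.inr (ih hB hC))
  | and A B ihA ihB =>
    intro D C hD hC
    rcases List.mem_cons.1 hD with rfl | hD
    · exact hC
    · rcases List.mem_append.1 hD with h | h
      · exact List.mem_cons.2 (Or.inr (List.mem_append.2 (Or.inl (ihA h hC))))
      · exact List.mem_cons.2 (Or.inr (List.mem_append.2 (Or.inr (ihB h hC))))
  | or A B ihA ihB =>
    intro D C hD hC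
    rcases List.mem_cons.1 hD with rfl | hD
    · exact hC
    · rcases List.mem_append.1 hD with h | h
      · exact List.mem_cons.2 (Or.inr (List.mem_append.2 (Or.inl (ihA h hC))))
      · exact List.mem_cons.2 (Or.inr (List.mem_append.2 (Or.inr (ihB h hC))))
  | imp A B ihA ihB =>
    intro D C hD hC
    rcases List.mem_cons.1 hD with rfl | hD
    · exact hC
    · rcases List.mem_append.1 hD with h | h
      · exact List.mem_cons.2 (Or.inr (List.mem_append.2 (Or.inl (ihA h hC))))
      · exact List.mem_cons.2 (Or.inr (List.mem_append.2 (Or.inr (ihB h hC))))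
  | boxp A ih =>
    intro B C hB hC
    rcases List.mem_cons.1 hB with rfl | hB
    · exact hC
    · exact List.mem_cons.2 (Or.inr (ih hB hC))
  | boxf A ih =>
    intro B C hB hC
    rcases List.mem_cons.1 hB with rfl | hB
    · exact hC
    · exact List.mem_cons.2 (Or.inr (ih hB hC))

/-- The closure set: subformulas of `A0` together with `□f C` for each `□p C`. -/
private def SigL (A0 : Formula) : List Formula :=
  subf A0 ++ (subf A0).filterMap
    (fun B => match B with | .boxp C => some (.boxf C) | _ => none)

private lemma subf_sub_sig {A0 : Formula} {B : Formula} (h : B ∈ subf A0) :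
    B ∈ SigL A0 := List.mem_append.2 (Or.inl h)

private lemma sig_sub_closed {A0 B C : Formula} (hB : B ∈ SigL A0) (hC : C ∈ subf B) :
    C ∈ SigL A0 := by
  rcases List.mem_append.1 hB with h | h
  · exact subf_sub_sig (subf_trans h hC)
  · obtain ⟨D, hD, hDB⟩ := List.mem_filterMap.1 h
    cases D <;> simp at hDB
    rename_i E
    subst hDB
    rcases List.mem_cons.1 hC with rfl | hC
    · exact hB
    · refine subf_sub_sig (subf_trans hD ?_)
      exact List.mem_cons.2 (Or.inr hC)

private lemma boxf_mem_sig {A0 C : Formula} (h : .boxp C ∈ SigL A0) :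
    .boxf C ∈ SigL A0 := by
  rcases List.mem_append.1 h with h1 | h1
  · refine List.mem_append.2 (Or.inr (List.mem_filterMap.2 ⟨.boxp C, h1, rfl⟩))
  · obtain ⟨D, _, hDB⟩ := List.mem_filterMap.1 h1
    cases D <;> simp at hDB

/-! ### The canonical finite model -/

private def traceOf (A0 : Formula) (y : Set Formula) : Set Formula :=
  {B | B ∈ SigL A0 ∧ B ∈ y}

private def cone (A0 : Formula) (x : Set Formula) : Set (Set Formula) :=
  {s | ∃ y, IsMCS y ∧ Sc x y ∧ s = traceOf A0 y}

private def GoodW (A0 : Formula) (p : Set Formula × Set (Set Formula)) : Prop :=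
  (∃ x, IsMCS x ∧ p.2 = cone A0 x) ∧ p.1 ∈ p.2

private def Wld (A0 : Formula) : Type := {p : Set Formula × Set (Set Formula) // GoodW A0 p}

private def Rw (A0 : Formula) (w v : Wld A0) : Prop :=
  (∀ C, .boxp C ∈ w.1.1 → .boxp C ∈ v.1.1) ∧
  (∃ C, .boxp C ∈ v.1.1 ∧ .boxp C ∉ w.1.1) ∧
  (∀ C, .boxp C ∈ w.1.1 → ∀ t ∈ v.1.2, .boxf C ∈ t)

private def Sw (A0 : Formula) (w v : Wld A0) : Prop :=
  w.1.2 = v.1.2 ∧ ∀ C, .boxf C ∈ w.1.1 → .boxf C ∈ v.1.1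

private def Val (A0 : Formula) (w : Wld A0) (n : ℕ) : Prop := .var n ∈ w.1.1

private lemma trace_mem_iff {A0 : Formula} {y : Set Formula} {B : Formula}
    (hB : B ∈ SigL A0) : B ∈ traceOf A0 y ↔ B ∈ y :=
  ⟨fun h => h.2, fun h => ⟨hB, h⟩⟩

private lemma world_realizer {A0 : Formula} (w : Wld A0) :
    ∃ x y, IsMCS x ∧ w.1.2 = cone A0 x ∧ IsMCS y ∧ Sc x y ∧ w.1.1 = traceOf A0 y := by
  obtain ⟨⟨x, hx, hx2⟩, h1⟩ := w.2
  rw [hx2] at h1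
  obtain ⟨y, hy, hxy, hy2⟩ := h1
  exact ⟨x, y, hx, hx2, hy, hxy, hy2⟩

/-- All traces in one cone agree on `□p`-formulas. -/
private lemma cone_boxp_eq {A0 : Formula} {x : Set Formula} (hx : IsMCS x)
    {t1 t2 : Set Formula} (h1 : t1 ∈ cone A0 x) (h2 : t2 ∈ cone A0 x) {C : Formula}
    (hC : .boxp C ∈ t1) : .boxp C ∈ t2 := by
  obtain ⟨y1, hy1, hxy1, rfl⟩ := h1
  obtain ⟨y2, hy2, hxy2, rfl⟩ := h2
  refine ⟨hC.1, ?_⟩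
  exact (sc_boxp_iff hx hy2 hxy2 C).1 ((sc_boxp_iff hx hy1 hxy1 C).2 hC.2)

/-- Same-cluster worlds agree on `□p`-formulas. -/
private lemma cluster_boxp_eq {A0 : Formula} {w v : Wld A0} (h : w.1.2 = v.1.2)
    {C : Formula} (hC : .boxp C ∈ w.1.1) : .boxp C ∈ v.1.1 := by
  obtain ⟨x, y, hx, hx2, _, _, _⟩ := world_realizer w
  have h1 : w.1.1 ∈ cone A0 x := by rw [← hx2]; exact w.2.2
  have h2 : v.1.1 ∈ cone A0 x := by
    have := v.2.2
    rwa [← h, hx2] at this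
  exact cone_boxp_eq hx h1 h2 hC


/-! ### The truth lemma -/

private lemma truth_lemma {A0 : Formula} :
    ∀ B, B ∈ SigL A0 → ∀ w : Wld A0,
      Sat (Rw A0) (Sw A0) (Val A0) w B ↔ B ∈ w.1.1 := by
  intro B
  induction B with
  | var n =>
    intro hB w
    simp only [Sat, Val]
  | neg C ih =>
    intro hB w
    have hC : C ∈ SigL A0 := sig_sub_closed hB (by
      exact List.mem_cons.2 (Or.inr (mem_subf_self C)))
    obtain ⟨x, y, hx, hx2, hy, hxy, hy1⟩ := world_realizer w
    have e : ∀ D, D ∈ SigL A0 → (D ∈ w.1.1 ↔ D ∈ y) := by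
      intro D hD; rw [hy1]; exact trace_mem_iff hD
    simp only [Sat, ih hC w]
    rw [e _ hB, e _ hC, mcs_neg_iff hy]
  | and C D ihC ihD =>
    intro hB w
    have hC : C ∈ SigL A0 := sig_sub_closed hB (List.mem_cons.2 (Or.inr
      (List.mem_append.2 (Or.inl (mem_subf_self C)))))
    have hD : D ∈ SigL A0 := sig_sub_closed hB (List.mem_cons.2 (Or.inr
      (List.mem_append.2 (Or.inr (mem_subf_self D)))))
    obtain ⟨x, y, hx, hx2, hy, hxy, hy1⟩ := world_realizer w
    have e : ∀ E, E ∈ SigL A0 → (E ∈ w.1.1 ↔ E ∈ y) := by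
      intro E hE; rw [hy1]; exact trace_mem_iff hE
    simp only [Sat, ihC hC w, ihD hD w]
    rw [e _ hB, e _ hC, e _ hD, mcs_and_iff hy]
  | or C D ihC ihD =>
    intro hB w
    have hC : C ∈ SigL A0 := sig_sub_closed hB (List.mem_cons.2 (Or.inr
      (List.mem_append.2 (Or.inl (mem_subf_self C)))))
    have hD : D ∈ SigL A0 := sig_sub_closed hB (List.mem_cons.2 (Or.inr
      (List.mem_append.2 (Or.inr (mem_subf_self D)))))
    obtain ⟨x, y, hx, hx2, hy, hxy, hy1⟩ := world_realizer w
    have e : ∀ E, E ∈ SigL A0 → (E ∈ w.1.1 ↔ E ∈ y) := by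
      intro E hE; rw [hy1]; exact trace_mem_iff hE
    simp only [Sat, ihC hC w, ihD hD w]
    rw [e _ hB, e _ hC, e _ hD, mcs_or_iff hy]
  | imp C D ihC ihD =>
    intro hB w
    have hC : C ∈ SigL A0 := sig_sub_closed hB (List.mem_cons.2 (Or.inr
      (List.mem_append.2 (Or.inl (mem_subf_self C)))))
    have hD : D ∈ SigL A0 := sig_sub_closed hB (List.mem_cons.2 (Or.inr
      (List.mem_append.2 (Or.inr (mem_subf_self D)))))
    obtain ⟨x, y, hx, hx2, hy, hxy, hy1⟩ := world_realizer w
    have e : ∀ E, E ∈ SigL A0 → (E ∈ w.1.1 ↔ E ∈ y) := by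
      intro E hE; rw [hy1]; exact trace_mem_iff hE
    simp only [Sat, ihC hC w, ihD hD w]
    rw [e _ hB, e _ hC, e _ hD, mcs_imp_iff hy]
  | boxp C ih =>
    intro hB w
    have hC : C ∈ SigL A0 :=
      sig_sub_closed hB (List.mem_cons.2 (Or.inr (mem_subf_self C)))
    constructor
    · -- contrapositive
      intro hSat
      by_contra hmem
      obtain ⟨x, y, hx, hx2, hy, hxy, hy1⟩ := world_realizer w
      have hny : .boxp C ∉ y := by
        intro h; exact hmem (by rw [hy1]; exact ⟨hB, h⟩)
      -- the list of boxed hypotheses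
      set LcAll : List Formula := (SigL A0).filterMap
        (fun D => match D with | .boxp E => some E | _ => none) with hLcAll
      set Lc := LcAll.filter (fun E => .boxp E ∈ y) with hLc
      have hLcy : ∀ E ∈ Lc, .boxp E ∈ y := by
        intro E hE
        have := List.mem_filter.1 hE
        simpa using this.2
      obtain ⟨z, hz, hnegC, hboxpC, hall⟩ := glp_exists hy hny Lc hLcy
      have hcover : ∀ D, .boxp D ∈ w.1.1 → D ∈ Lc := by
        intro D hD
        rw [hy1] at hD
        refine List.mem_filter.2 ⟨?_, by simpa using hD.2⟩
        exact List.mem_filterMap.2 ⟨.boxp D, hD.1, rfl⟩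
      set v : Wld A0 := ⟨(traceOf A0 z, cone A0 z),
        ⟨⟨z, hz, rfl⟩, ⟨z, hz, sc_refl z, rfl⟩⟩⟩ with hv
      have hRwv : Rw A0 w v := by
        refine ⟨?_, ⟨C, ⟨hB, hboxpC⟩, hmem⟩, ?_⟩
        · intro D hD
          have h1 : .boxp D ∈ SigL A0 := by rw [hy1] at hD; exact hD.1
          exact ⟨h1, (hall D (hcover D hD)).1⟩
        · intro D hD t ht
          have h1 : .boxp D ∈ SigL A0 := by rw [hy1] at hD; exact hD.1
          have h2 : .boxf D ∈ z := (hall D (hcover D hD)).2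
          obtain ⟨y', hy', hzy', rfl⟩ := ht
          exact ⟨boxf_mem_sig h1, hzy' D h2⟩
      have := (ih hC v).1 (hSat v hRwv)
      have hCz : C ∈ z := this.2
      exact (mcs_neg_iff hz).1 hnegC hCz
    · intro hmem v hRwv
      have h1 : .boxf C ∈ v.1.1 := hRwv.2.2 C hmem v.1.1 v.2.2
      obtain ⟨x', y', hx', hx2', hy', hxy', hy1'⟩ := world_realizer v
      have h2 : .boxf C ∈ y' := by rw [hy1'] at h1; exact h1.2
      have h3 : C ∈ y' := mcs_mem_of_imp hy' (PF.tf C) h2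
      exact (ih hC v).2 (by rw [hy1']; exact ⟨hC, h3⟩)
  | boxf C ih =>
    intro hB w
    have hC : C ∈ SigL A0 :=
      sig_sub_closed hB (List.mem_cons.2 (Or.inr (mem_subf_self C)))
    constructor
    · intro hSat
      by_contra hmem
      obtain ⟨x, y, hx, hx2, hy, hxy, hy1⟩ := world_realizer w
      have hny : .boxf C ∉ y := by
        intro h; exact hmem (by rw [hy1]; exact ⟨hB, h⟩)
      obtain ⟨z, hz, hyz, hCz⟩ := diaf_exists hy hny
      set v : Wld A0 := ⟨(traceOf A0 z, w.1.2),
        ⟨⟨x, hx, hx2⟩, by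
          rw [hx2]
          exact ⟨z, hz, sc_trans hxy hyz, rfl⟩⟩⟩ with hv
      have hSwv : Sw A0 w v := by
        refine ⟨rfl, ?_⟩
        intro D hD
        rw [hy1] at hD
        exact ⟨hD.1, hyz D hD.2⟩
      have := (ih hC v).1 (hSat v hSwv)
      exact hCz this.2
    · intro hmem v hSwv
      have h1 : .boxf C ∈ v.1.1 := hSwv.2 C hmem
      obtain ⟨x', y', hx', hx2', hy', hxy', hy1'⟩ := world_realizer v
      have h2 : .boxf C ∈ y' := by rw [hy1'] at h1; exact h1.2
      have h3 : C ∈ y' := mcs_mem_of_imp hy' (PF.tf C) h2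
      exact (ih hC v).2 (by rw [hy1']; exact ⟨hC, h3⟩)


/-! ### Frame conditions of the canonical model -/

private lemma rw_trans {A0 : Formula} {w v u : Wld A0} (h1 : Rw A0 w v) (h2 : Rw A0 v u) :
    Rw A0 w u := by
  obtain ⟨C, hCu, hCv⟩ := h2.2.1
  refine ⟨fun C hC => h2.1 C (h1.1 C hC), ⟨C, hCu, fun hCw => hCv (h1.1 C hCw)⟩,
    fun C hC t ht => h2.2.2 C (h1.1 C hC) t ht⟩

private lemma rw_irrefl {A0 : Formula} (w : Wld A0) : ¬ Rw A0 w w := by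
  rintro ⟨_, ⟨C, hC1, hC2⟩, _⟩
  exact hC2 hC1

private lemma sw_refl {A0 : Formula} (w : Wld A0) : Sw A0 w w := ⟨rfl, fun _ h => h⟩

private lemma sw_trans {A0 : Formula} {w v u : Wld A0} (h1 : Sw A0 w v) (h2 : Sw A0 v u) :
    Sw A0 w u := ⟨h1.1.trans h2.1, fun C hC => h2.2 C (h1.2 C hC)⟩

private lemma sw_directed {A0 : Formula} (w v u : Wld A0) (h1 : Sw A0 w v)
    (h2 : Sw A0 w u) : ∃ m, Sw A0 v m ∧ Sw A0 u m := by
  obtain ⟨x, y, hx, hx2, hy, hxy, hy1⟩ := world_realizer w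
  have hv : v.1.1 ∈ cone A0 x := by
    have := v.2.2; rw [← h1.1, hx2] at this; exact this
  have hu : u.1.1 ∈ cone A0 x := by
    have := u.2.2; rw [← h2.1, hx2] at this; exact this
  obtain ⟨y1, hy1', hxy1, hv1⟩ := hv
  obtain ⟨y2, hy2', hxy2, hu1⟩ := hu
  obtain ⟨m', hm', hy1m, hy2m⟩ := sc_directed hx hy1' hy2' hxy1 hxy2
  set m : Wld A0 := ⟨(traceOf A0 m', w.1.2),
    ⟨⟨x, hx, hx2⟩, by rw [hx2]; exact ⟨m', hm', sc_trans hxy1 hy1m, rfl⟩⟩⟩ with hm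
  refine ⟨m, ⟨?_, ?_⟩, ⟨?_, ?_⟩⟩
  · exact h1.1.symm
  · intro C hC
    rw [hv1] at hC
    exact ⟨hC.1, hy1m C hC.2⟩
  · exact h2.1.symm
  · intro C hC
    rw [hu1] at hC
    exact ⟨hC.1, hy2m C hC.2⟩

private lemma cond1 {A0 : Formula} {w v u : Wld A0} (h1 : Sw A0 w v) (h2 : Rw A0 v u) :
    Rw A0 w u := by
  obtain ⟨C, hCu, hCv⟩ := h2.2.1
  exact ⟨fun C hC => h2.1 C (cluster_boxp_eq h1.1 hC),
    ⟨C, hCu, fun hCw => hCv (cluster_boxp_eq h1.1 hCw)⟩,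
    fun C hC t ht => h2.2.2 C (cluster_boxp_eq h1.1 hC) t ht⟩

private lemma cond2 {A0 : Formula} {w v u : Wld A0} (h1 : Sw A0 w v) (h2 : Rw A0 w u) :
    Rw A0 v u := by
  obtain ⟨C, hCu, hCw⟩ := h2.2.1
  exact ⟨fun C hC => h2.1 C (cluster_boxp_eq h1.1.symm hC),
    ⟨C, hCu, fun hCv => hCw (cluster_boxp_eq h1.1.symm hCv)⟩,
    fun C hC t ht => h2.2.2 C (cluster_boxp_eq h1.1.symm hC) t ht⟩

private lemma cond3 {A0 : Formula} {w v u : Wld A0} (h1 : Rw A0 w v) (h2 : Sw A0 v u) :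
    Rw A0 w u := by
  obtain ⟨C, hCv, hCw⟩ := h1.2.1
  exact ⟨fun C hC => cluster_boxp_eq h2.1 (h1.1 C hC),
    ⟨C, cluster_boxp_eq h2.1 hCv, hCw⟩,
    fun C hC t ht => h1.2.2 C hC t (h2.1 ▸ ht)⟩

private lemma cond_nice {A0 : Formula} {w v u : Wld A0} (h1 : Rw A0 w u) (h2 : Sw A0 v u) :
    Rw A0 w v := by
  obtain ⟨C, hCu, hCw⟩ := h1.2.1
  exact ⟨fun C hC => cluster_boxp_eq h2.1.symm (h1.1 C hC),
    ⟨C, cluster_boxp_eq h2.1.symm hCu, hCw⟩,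
    fun C hC t ht => h1.2.2 C hC t (h2.1 ▸ ht)⟩

/-! ### Soundness over finite frames with the right conditions -/

private lemma sound_cond {W : Type} [Finite W] (R S : W → W → Prop)
    (hRt : ∀ {x y z}, R x y → R y z → R x z) (hRi : ∀ x, ¬ R x x)
    (hSr : ∀ x, S x x) (hSt : ∀ {x y z}, S x y → S y z → S x z)
    (hdir : ∀ x y z, S x y → S x z → ∃ m, S y m ∧ S z m)
    (h1 : ∀ {x y z}, S x y → R y z → R x z)
    (h2 : ∀ {x y v}, S x y → R x v → R y v)
    (h3 : ∀ {x y z}, R x y → S y z → R x z) :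
    IsPFFrame R S := by
  intro B hB
  induction hB with
  | @taut A h =>
    intro V w
    set f : Formula → Bool := fun C => decide (Sat R S V w C) with hf
    have hn : ∀ C, f (.neg C) = !(f C) := by
      intro C; by_cases h : Sat R S V w C <;> simp [hf, Sat, h]
    have ha : ∀ C D, f (.and C D) = (f C && f D) := by
      intro C D
      by_cases hc : Sat R S V w C <;> by_cases hd : Sat R S V w D <;>
        simp [hf, Sat, hc, hd]
    have ho : ∀ C D, f (.or C D) = (f C || f D) := by
      intro C D
      by_cases hc : Sat R S V w C <;> by_cases hd : Sat R S V w D <;>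
        simp [hf, Sat, hc, hd]
    have hi : ∀ C D, f (.imp C D) = (!(f C) || f D) := by
      intro C D
      by_cases hc : Sat R S V w C <;> by_cases hd : Sat R S V w D <;>
        simp [hf, Sat, hc, hd]
    have := h f hn ha ho hi
    exact of_decide_eq_true this
  | kp A B =>
    intro V w
    simp only [Sat]
    intro hab ha v hv
    exact hab v hv (ha v hv)
  | lob A =>
    intro V w
    simp only [Sat]
    intro h
    haveI : IsTrans W (fun a b => R b a) := ⟨fun a b c h1 h2 => hRt h2 h1⟩
    haveI : IsIrrefl W (fun a b => R b a) := ⟨hRi⟩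
    have wf : WellFounded (fun a b : W => R b a) :=
      Finite.wellFounded_of_trans_of_irrefl _
    intro v hv
    revert hv
    refine wf.induction (C := fun v => R w v → Sat R S V v A) v ?_
    intro v ih hv
    exact h v hv (fun u hu => ih u hu (hRt hv hu))
  | kf A B =>
    intro V w
    simp only [Sat]
    intro hab ha v hv
    exact hab v hv (ha v hv)
  | tf A =>
    intro V w
    simp only [Sat]
    intro h
    exact h w (hSr w)
  | fourf A =>
    intro V w
    simp only [Sat]
    intro h v hv u hu
    exact h u (hSt hv hu)
  | dot2f A =>
    intro V w
    simp only [Sat, diaf]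
    intro hd z hz hcon
    push_neg at hd
    obtain ⟨v, hv1, hv2⟩ := hd
    obtain ⟨m, hvm, hzm⟩ := hdir w v z hv1 hz
    exact hcon m hzm (hv2 m hvm)
  | pf1 A =>
    intro V w
    simp only [Sat]
    intro h v hv u hu
    exact h u (h1 hv hu)
  | pf2 A =>
    intro V w
    simp only [Sat, diap]
    intro hd z hz hcon
    push_neg at hd
    obtain ⟨v, hv1, hv2⟩ := hd
    exact hcon v (h2 hz hv1) hv2
  | pf3 A =>
    intro V w
    simp only [Sat]
    intro h v hv u hu
    exact h u (h3 hv hu)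
  | mp hab ha ihab iha =>
    intro V w
    exact (ihab V w) (iha V w)
  | necp h ih =>
    intro V w
    simp only [Sat]
    intro v _
    exact ih V v
  | necf h ih =>
    intro V w
    simp only [Sat]
    intro v _
    exact ih V v


/-! ### Finiteness -/

private lemma world_trace_sub {A0 : Formula} (w : Wld A0) :
    ∀ B ∈ w.1.1, B ∈ SigL A0 := by
  obtain ⟨x, y, hx, hx2, hy, hxy, hy1⟩ := world_realizer w
  rw [hy1]
  intro B hB
  exact hB.1

private lemma cone_elem_sub {A0 : Formula} {x t : Set Formula} (h : t ∈ cone A0 x) :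
    ∀ B ∈ t, B ∈ SigL A0 := by
  obtain ⟨y, _, _, rfl⟩ := h
  intro B hB
  exact hB.1

private lemma wld_finite (A0 : Formula) : Finite (Wld A0) := by
  haveI hfin : Finite {B : Formula // B ∈ SigL A0} :=
    ((SigL A0).finite_toSet).to_subtype
  set SgT := {B : Formula // B ∈ SigL A0} with hSgT
  set φ : Wld A0 → (SgT → Bool) × ((SgT → Bool) → Bool) := fun w =>
    ((fun B => decide (B.1 ∈ w.1.1)),
     (fun g => decide ({C | ∃ h : C ∈ SigL A0, g ⟨C, h⟩ = true} ∈ w.1.2))) with hφ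
  have hinj : Function.Injective φ := by
    intro w v h
    have h1 := congrArg Prod.fst h
    have h2 := congrArg Prod.snd h
    simp only [hφ] at h1 h2
    have ht : w.1.1 = v.1.1 := by
      ext B
      constructor
      · intro hB
        have hBs : B ∈ SigL A0 := world_trace_sub w B hB
        have := congrFun h1 ⟨B, hBs⟩
        exact (decide_eq_decide.mp this).1 hB
      · intro hB
        have hBs : B ∈ SigL A0 := world_trace_sub v B hB
        have := congrFun h1 ⟨B, hBs⟩
        exact (decide_eq_decide.mp this).2 hB
    have hk : w.1.2 = v.1.2 := by
      ext t
      constructor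
      · intro htw
        have hts : ∀ B ∈ t, B ∈ SigL A0 := by
          obtain ⟨x, hx, hx2⟩ := w.2.1
          rw [hx2] at htw
          exact cone_elem_sub htw
        have hrecon : {C | ∃ h : C ∈ SigL A0, decide (C ∈ t) = true} = t := by
          ext C
          constructor
          · rintro ⟨h', hd⟩
            exact of_decide_eq_true hd
          · intro hC
            exact ⟨hts C hC, decide_eq_true hC⟩
        have h3 := congrFun h2 (fun B : SgT => decide (B.1 ∈ t))
        have hiff := decide_eq_decide.mp h3
        rw [hrecon] at hiff
        exact hiff.1 htw
      · intro htv
        have hts : ∀ B ∈ t, B ∈ SigL A0 := by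
          obtain ⟨x, hx, hx2⟩ := v.2.1
          rw [hx2] at htv
          exact cone_elem_sub htv
        have hrecon : {C | ∃ h : C ∈ SigL A0, decide (C ∈ t) = true} = t := by
          ext C
          constructor
          · rintro ⟨h', hd⟩
            exact of_decide_eq_true hd
          · intro hC
            exact ⟨hts C hC, decide_eq_true hC⟩
        have h3 := congrFun h2 (fun B : SgT => decide (B.1 ∈ t))
        have hiff := decide_eq_decide.mp h3
        rw [hrecon] at hiff
        exact hiff.2 htv
    exact Subtype.ext (Prod.ext ht hk)
  exact Finite.of_injective φ hinj

private lemma wld_frame (A0 : Formula) : IsPFFrame (Rw A0) (Sw A0) := by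
  haveI := wld_finite A0
  exact sound_cond (Rw A0) (Sw A0)
    (fun h1 h2 => rw_trans h1 h2) rw_irrefl sw_refl
    (fun h1 h2 => sw_trans h1 h2) sw_directed
    (fun h1 h2 => cond1 h1 h2) (fun h1 h2 => cond2 h1 h2)
    (fun h1 h2 => cond3 h1 h2)

private lemma wld_nice (A0 : Formula) : Nice (Rw A0) (Sw A0) :=
  fun _ _ _ hxz hyz => cond_nice hxz hyz

end Completeness
theorem statement_8 (A : Formula) :
    PF A ↔
      ∀ (W : Type) (R S : W → W → Prop), Nonempty W → Finite W →
        IsPFFrame R S → Nice R S → ValidOn R S A := by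
  constructor
  · intro hA W R S _ _ hframe _
    exact hframe A hA
  · intro h
    by_contra hnA
    have hcon : Con (insert (.neg A) (∅ : Set Formula)) := by
      intro hd
      apply hnA
      obtain ⟨L, hL, hp⟩ := deduc_insert hd
      have hLnil : L = [] := by
        cases L with
        | nil => rfl
        | cons a t => exact absurd (hL a (by simp)) (Set.notMem_empty a)
      subst hLnil
      have h2 : PF (.imp (.neg A) falsum) := hp.mp (pf_imp_self (A := .var 0))
      have t : Taut (.imp (.imp (.neg A) falsum) A) := by
        intro f hn ha ho hi
        simp only [hi, hn, falsum]
        cases f A <;> cases f (Formula.var 0) <;> rfl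
      exact (PF.taut t).mp h2
    obtain ⟨x0, hsub, hx0⟩ := lindenbaum hcon
    have hnegA : .neg A ∈ x0 := hsub (Set.mem_insert _ _)
    have hA0 : A ∈ SigL A := subf_sub_sig (mem_subf_self A)
    set w0 : Wld A := ⟨(traceOf A x0, cone A x0),
      ⟨⟨x0, hx0, rfl⟩, ⟨x0, hx0, sc_refl x0, rfl⟩⟩⟩ with hw0
    have hval := h (Wld A) (Rw A) (Sw A) ⟨w0⟩ (wld_finite A) (wld_frame A) (wld_nice A)
    have hsat := hval (Val A) w0
    have hmem := (truth_lemma (A0 := A) A hA0 w0).1 hsat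
    exact (mcs_neg_iff hx0).1 hnegA hmem.2

end PFPaper
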